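/- arXiv:2402.16387 — 3 statements merged into one kernel-verified Lean document; each statement's English description precedes it below -/
import Mathlib

section
/- Let σ : ℝ → ℝ be ρ-Lipschitz with ρ > 0 (applied entrywise to vectors), let κ > 0, α ∈ {0,1}, ω ≥ 0, c ≥ 0, and let W₁, W₂, W̃₁, W̃₂ be m×m real matrices with ‖W₁‖₂ ≤ 3, ‖W̃₁ - W₁‖₂ ≤ ω and ‖W̃₂ - W₂‖₂ ≤ ω. Let x_1, x_2, … ∈ ℝ^m satisfy ‖x_ℓ‖₂ ≤ 1 for all ℓ ≥ 1. Define recursively h_0 = h̃_0 = 0 and, for ℓ ≥ 1, h_ℓ = σ(κ·(W₁·h_{ℓ-1} + W₂·x_ℓ)) + α·h_{ℓ-1} and h̃_ℓ = σ(κ·(W̃₁·h̃_{ℓ-1} + W̃₂·x_ℓ)) + α·h̃_{ℓ-1}. If in addition ‖h̃_ℓ‖₂ ≤ c for every ℓ ≥ 0, then for every ℓ ≥ 0, ‖h̃_ℓ - h_ℓ‖₂ ≤ κρω·(1 + c)·((1 + 3κρ)^ℓ - 1)/(3κρ). -/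
/-!
Writing `e_ℓ = ‖h̃_ℓ - h_ℓ‖₂`, the two pre-activations differ by
`κ (W₁ (h̃_{ℓ-1} - h_{ℓ-1}) + (W̃₁ - W₁) h̃_{ℓ-1} + (W̃₂ - W₂) x_ℓ)`, so the Lipschitz bound on `σ`
and `|α| ≤ 1` give the one-step estimate `e_ℓ ≤ (1 + 3κρ) e_{ℓ-1} + κρω(1 + c)`.
Unrolling it from `e_0 = 0` yields the geometric sum `κρω(1 + c) ∑_{k < ℓ} (1 + 3κρ)^k`.
-/

open scoped NNReal

/-- Euclidean (ℓ₂) norm of a vector in `ℝ^m`. -/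
noncomputable def l2norm {m : ℕ} (v : Fin m → ℝ) : ℝ := Real.sqrt (∑ i, v i ^ 2)

/-- ℓ₂→ℓ₂ operator (spectral) norm of a real matrix. -/
noncomputable def l2OpNorm {m n : ℕ} (A : Matrix (Fin m) (Fin n) ℝ) : ℝ :=
  ‖LinearMap.toContinuousLinearMap (Matrix.toEuclideanLin A)‖

open Finset Matrix

lemma le_geom_sum_mul_of_le_mul_add {e : ℕ → ℝ} {q b : ℝ} (hq : 0 ≤ q) (he₀ : e 0 ≤ 0)
    (he : ∀ n, e (n + 1) ≤ q * e n + b) (n : ℕ) : e n ≤ (∑ i ∈ range n, q ^ i) * b := by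
  induction n with
  | zero => simpa using he₀
  | succ n ih =>
    calc e (n + 1) ≤ q * e n + b := he n
      _ ≤ q * ((∑ i ∈ range n, q ^ i) * b) + b := by gcongr
      _ = (∑ i ∈ range (n + 1), q ^ i) * b := by rw [geom_sum_succ]; ring

section L2

variable {m n : ℕ}

lemma l2norm_eq_norm_toLp (v : Fin m → ℝ) : l2norm v = ‖WithLp.toLp 2 v‖ := by
  simp [l2norm, EuclideanSpace.norm_eq]

lemma l2norm_nonneg (v : Fin m → ℝ) : 0 ≤ l2norm v := Real.sqrt_nonneg _

lemma l2norm_add_le (u v : Fin m → ℝ) : l2norm (u + v) ≤ l2norm u + l2norm v := by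
  simpa only [l2norm_eq_norm_toLp, WithLp.toLp_add] using norm_add_le _ _

lemma l2norm_smul (a : ℝ) (v : Fin m → ℝ) : l2norm (a • v) = |a| * l2norm v := by
  simp only [l2norm_eq_norm_toLp, WithLp.toLp_smul, norm_smul, Real.norm_eq_abs]

lemma l2norm_mulVec_le (A : Matrix (Fin m) (Fin n) ℝ) (v : Fin n → ℝ) :
    l2norm (A *ᵥ v) ≤ l2OpNorm A * l2norm v := by
  rw [l2norm_eq_norm_toLp, l2norm_eq_norm_toLp]
  exact (LinearMap.toContinuousLinearMap (toEuclideanLin A)).le_opNorm (WithLp.toLp 2 v)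

lemma LipschitzWith.l2norm_comp_sub_le {σ : ℝ → ℝ} {ρ : ℝ≥0} (hσ : LipschitzWith ρ σ)
    (a b : Fin m → ℝ) : l2norm (fun i => σ (a i) - σ (b i)) ≤ ρ * l2norm (a - b) := by
  rw [l2norm, l2norm, ← Real.sqrt_sq ρ.coe_nonneg, ← Real.sqrt_mul (sq_nonneg _), mul_sum]
  gcongr with i
  rw [← mul_pow, sq_le_sq, abs_mul, NNReal.abs_eq]
  simpa only [Real.dist_eq, Pi.sub_apply] using hσ.dist_le_mul (a i) (b i)

end L2

def rnnStep {m : ℕ} (σ : ℝ → ℝ) (κ α : ℝ) (W₁ W₂ : Matrix (Fin m) (Fin m) ℝ)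
    (h x : Fin m → ℝ) : Fin m → ℝ :=
  (fun i => σ (κ * ((W₁ *ᵥ h) i + (W₂ *ᵥ x) i))) + α • h

lemma l2norm_rnnStep_sub_le {m : ℕ} {σ : ℝ → ℝ} {ρ : ℝ≥0} (hσ : LipschitzWith ρ σ) (κ α : ℝ)
    (W₁ W₂ W₁' W₂' : Matrix (Fin m) (Fin m) ℝ) (h h' x : Fin m → ℝ) :
    l2norm (rnnStep σ κ α W₁' W₂' h' x - rnnStep σ κ α W₁ W₂ h x) ≤
      (|α| + |κ| * ρ * l2OpNorm W₁) * l2norm (h' - h) +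
        |κ| * ρ * (l2OpNorm (W₁' - W₁) * l2norm h' + l2OpNorm (W₂' - W₂) * l2norm x) := by
  set a := fun i => κ * ((W₁ *ᵥ h) i + (W₂ *ᵥ x) i)
  set a' := fun i => κ * ((W₁' *ᵥ h') i + (W₂' *ᵥ x) i)
  have hsplit : rnnStep σ κ α W₁' W₂' h' x - rnnStep σ κ α W₁ W₂ h x =
      (fun i => σ (a' i) - σ (a i)) + α • (h' - h) := by
    ext i
    simp only [rnnStep, Pi.add_apply, Pi.sub_apply, Pi.smul_apply, smul_eq_mul, a, a']
    ring
  have hpre : a' - a = κ • (W₁ *ᵥ (h' - h) + ((W₁' - W₁) *ᵥ h' + (W₂' - W₂) *ᵥ x)) := by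
    ext i
    simp only [a, a', Pi.sub_apply, Pi.smul_apply, Pi.add_apply, smul_eq_mul, sub_mulVec,
      mulVec_sub]
    ring
  have hpre_le : l2norm (a' - a) ≤ |κ| * (l2OpNorm W₁ * l2norm (h' - h) +
      (l2OpNorm (W₁' - W₁) * l2norm h' + l2OpNorm (W₂' - W₂) * l2norm x)) := by
    rw [hpre, l2norm_smul]
    gcongr
    refine (l2norm_add_le _ _).trans (add_le_add (l2norm_mulVec_le _ _) ?_)
    exact (l2norm_add_le _ _).trans (add_le_add (l2norm_mulVec_le _ _) (l2norm_mulVec_le _ _))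
  calc l2norm (rnnStep σ κ α W₁' W₂' h' x - rnnStep σ κ α W₁ W₂ h x)
      ≤ ρ * l2norm (a' - a) + |α| * l2norm (h' - h) := by
        rw [hsplit, ← l2norm_smul]
        exact (l2norm_add_le _ _).trans (add_le_add (hσ.l2norm_comp_sub_le a' a) le_rfl)
    _ ≤ ρ * (|κ| * (l2OpNorm W₁ * l2norm (h' - h) +
          (l2OpNorm (W₁' - W₁) * l2norm h' + l2OpNorm (W₂' - W₂) * l2norm x))) +
          |α| * l2norm (h' - h) := by gcongr
    _ = _ := by ring

theorem rnn_hidden_states_stable_general {m : ℕ} (σ : ℝ → ℝ) (ρ : ℝ≥0) (hρ : 0 < ρ)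
    (hσ : LipschitzWith ρ σ) (κ : ℝ) (hκ : 0 < κ) (α : ℝ) (hα : α = 0 ∨ α = 1)
    (ω : ℝ) (hω : 0 ≤ ω) (c : ℝ)
    (W₁ W₂ W₁' W₂' : Matrix (Fin m) (Fin m) ℝ)
    (hW₁ : l2OpNorm W₁ ≤ 3) (hd₁ : l2OpNorm (W₁' - W₁) ≤ ω)
    (hd₂ : l2OpNorm (W₂' - W₂) ≤ ω)
    (x : ℕ → Fin m → ℝ) (hx : ∀ ℓ, 1 ≤ ℓ → l2norm (x ℓ) ≤ 1)
    (h h' : ℕ → Fin m → ℝ) (h0 : h 0 = 0) (h0' : h' 0 = 0)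
    (hrec : ∀ ℓ, 1 ≤ ℓ →
      h ℓ = (fun i => σ (κ * (W₁.mulVec (h (ℓ - 1)) i + W₂.mulVec (x ℓ) i))) +
        α • h (ℓ - 1))
    (hrec' : ∀ ℓ, 1 ≤ ℓ →
      h' ℓ = (fun i => σ (κ * (W₁'.mulVec (h' (ℓ - 1)) i + W₂'.mulVec (x ℓ) i))) +
        α • h' (ℓ - 1))
    (hbdd : ∀ ℓ, l2norm (h' ℓ) ≤ c) :
    ∀ ℓ, l2norm (h' ℓ - h ℓ) ≤
      κ * ρ * ω * (1 + c) * ((1 + 3 * κ * ρ) ^ ℓ - 1) / (3 * κ * ρ) := by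
  have hα_abs : |α| ≤ 1 := by rcases hα with rfl | rfl <;> norm_num
  have step (n : ℕ) : l2norm (h' (n + 1) - h (n + 1)) ≤
      (1 + 3 * κ * ρ) * l2norm (h' n - h n) + κ * ρ * ω * (1 + c) := by
    -- `n + 1 - 1` reduces to `n`, so the rewritten goal is an `rnnStep` difference up to defeq.
    rw [hrec (n + 1) n.succ_pos, hrec' (n + 1) n.succ_pos]
    calc _ ≤ (|α| + |κ| * ρ * l2OpNorm W₁) * l2norm (h' n - h n) + |κ| * ρ *
          (l2OpNorm (W₁' - W₁) * l2norm (h' n) + l2OpNorm (W₂' - W₂) * l2norm (x (n + 1))) :=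
          l2norm_rnnStep_sub_le hσ κ α W₁ W₂ W₁' W₂' (h n) (h' n) (x (n + 1))
      _ ≤ (1 + κ * ρ * 3) * l2norm (h' n - h n) + κ * ρ * (ω * c + ω * 1) := by
          rw [abs_of_pos hκ]
          gcongr
          exacts [l2norm_nonneg _, l2norm_nonneg _, hbdd n, l2norm_nonneg _, hx _ n.succ_pos]
      _ = _ := by ring
  intro ℓ
  calc l2norm (h' ℓ - h ℓ)
      ≤ (∑ i ∈ range ℓ, (1 + 3 * κ * ρ) ^ i) * (κ * ρ * ω * (1 + c)) :=
        le_geom_sum_mul_of_le_mul_add (e := fun n => l2norm (h' n - h n)) (by positivity)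
          (by simp [h0, h0', l2norm]) step ℓ
    _ = _ := by
        rw [geom_sum_eq (lt_add_of_pos_right 1 (by positivity)).ne' ℓ, add_sub_cancel_left]
        ring

/-- RNN hidden states computed at two `ω`-close sets of weights stay close: with a
`ρ`-Lipschitz activation `σ` (entrywise), normalization `κ > 0`, residual flag
`α ∈ {0,1}`, `‖W₁‖₂ ≤ 3`, `‖W̃₁ - W₁‖₂ ≤ ω`, `‖W̃₂ - W₂‖₂ ≤ ω`, inputs `‖x_ℓ‖₂ ≤ 1`,
recursions `h_ℓ = σ(κ(W₁h_{ℓ-1} + W₂x_ℓ)) + α·h_{ℓ-1}` (resp. with tildes) from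
`h_0 = h̃_0 = 0`, and `‖h̃_ℓ‖₂ ≤ c` for all `ℓ`, one has
`‖h̃_ℓ - h_ℓ‖₂ ≤ κρω(1 + c)((1 + 3κρ)^ℓ - 1)/(3κρ)` for every `ℓ ≥ 0`. -/
theorem rnn_hidden_states_stable {m : ℕ} (σ : ℝ → ℝ) (ρ : ℝ≥0) (hρ : 0 < ρ)
    (hσ : LipschitzWith ρ σ) (κ : ℝ) (hκ : 0 < κ) (α : ℝ) (hα : α = 0 ∨ α = 1)
    (ω : ℝ) (hω : 0 ≤ ω) (c : ℝ) (hc : 0 ≤ c)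
    (W₁ W₂ W₁' W₂' : Matrix (Fin m) (Fin m) ℝ)
    (hW₁ : l2OpNorm W₁ ≤ 3) (hd₁ : l2OpNorm (W₁' - W₁) ≤ ω)
    (hd₂ : l2OpNorm (W₂' - W₂) ≤ ω)
    (x : ℕ → Fin m → ℝ) (hx : ∀ ℓ, 1 ≤ ℓ → l2norm (x ℓ) ≤ 1)
    (h h' : ℕ → Fin m → ℝ) (h0 : h 0 = 0) (h0' : h' 0 = 0)
    (hrec : ∀ ℓ, 1 ≤ ℓ →
      h ℓ = (fun i => σ (κ * (W₁.mulVec (h (ℓ - 1)) i + W₂.mulVec (x ℓ) i))) +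
        α • h (ℓ - 1))
    (hrec' : ∀ ℓ, 1 ≤ ℓ →
      h' ℓ = (fun i => σ (κ * (W₁'.mulVec (h' (ℓ - 1)) i + W₂'.mulVec (x ℓ) i))) +
        α • h' (ℓ - 1))
    (hbdd : ∀ ℓ, l2norm (h' ℓ) ≤ c) :
    ∀ ℓ, l2norm (h' ℓ - h ℓ) ≤
      κ * ρ * ω * (1 + c) * ((1 + 3 * κ * ρ) ^ ℓ - 1) / (3 * κ * ρ) :=
  rnn_hidden_states_stable_general σ ρ hρ hσ κ hκ α hα ω hω c W₁ W₂ W₁' W₂' hW₁ hd₁ hd₂ x hx h h' h0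
    h0' hrec hrec' hbdd
end

section
/- For every variance a ≥ 0 and every slope η with 0 ≤ η ≤ 1, ∫ max(η·x, x)² d(gaussianReal 0 a)(x) = (1 + η²)·a/2; equivalently, 2·∫ max(η·x, x)² d(gaussianReal 0 a)(x) = (1 + η²)·a. -/
/-! Splitting at the origin, `max (η x) x ^ 2` is `x ^ 2` for `x ≥ 0` and `η ^ 2 x ^ 2` for `x ≤ 0`.
Hence it is the even part `(1 + η ^ 2) / 2 · x ^ 2`, whose Gaussian mean is the variance `a`, plus
the odd part `(1 - η ^ 2) / 2 · x |x|`, whose mean vanishes by the symmetry of the centered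
Gaussian. -/

open MeasureTheory ProbabilityTheory
open scoped NNReal

theorem integral_eq_zero_of_odd {G E : Type*} [MeasurableSpace G] [AddGroup G] [MeasurableNeg G]
    [NormedAddCommGroup E] [NormedSpace ℝ E] (μ : Measure G) [μ.IsNegInvariant] {f : G → E}
    (hf : ∀ x, f (-x) = -f x) : ∫ x, f x ∂μ = 0 := by
  have h := integral_neg_eq_self f μ
  simp only [hf, integral_neg] at h
  have h2 : (2 : ℝ) • ∫ x, f x ∂μ = 0 := by rw [two_smul]; nth_rw 1 [← h]; exact neg_add_cancel _
  exact (smul_eq_zero.mp h2).resolve_left two_ne_zero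

instance isNegInvariant_gaussianReal_zero (v : ℝ≥0) : (gaussianReal 0 v).IsNegInvariant :=
  ⟨by simpa [Measure.neg_def] using gaussianReal_map_neg (μ := 0) (v := v)⟩

theorem integrable_sq_gaussianReal (μ : ℝ) (v : ℝ≥0) :
    Integrable (fun x => x ^ 2) (gaussianReal μ v) :=
  (memLp_id_gaussianReal 2).integrable_sq

theorem integral_sq_gaussianReal_zero (v : ℝ≥0) : ∫ x, x ^ 2 ∂gaussianReal 0 v = v := by
  simpa using (variance_of_integral_eq_zero aemeasurable_id integral_id_gaussianReal).symm.trans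
    (variance_id_gaussianReal (μ := 0) (v := v))

theorem integrable_mul_abs_gaussianReal (μ : ℝ) (v : ℝ≥0) :
    Integrable (fun x => x * |x|) (gaussianReal μ v) :=
  (integrable_sq_gaussianReal μ v).mono (by fun_prop) (.of_forall fun x => by simp [sq])

theorem sq_max_mul_self_eq {η : ℝ} (hη : η ≤ 1) (x : ℝ) :
    max (η * x) x ^ 2 = (1 + η ^ 2) / 2 * x ^ 2 + (1 - η ^ 2) / 2 * (x * |x|) := by
  rcases le_total 0 x with hx | hx
  · rw [max_eq_right (by nlinarith), abs_of_nonneg hx]; ring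
  · rw [max_eq_left (by nlinarith), abs_of_nonpos hx]; ring

theorem gaussian_leakyrelu_sq_moment_general (a : ℝ≥0) (η : ℝ) (hη1 : η ≤ 1) :
    (∫ x, max (η * x) x ^ 2 ∂(gaussianReal 0 a)) = (1 + η ^ 2) * (a : ℝ) / 2 ∧
      2 * (∫ x, max (η * x) x ^ 2 ∂(gaussianReal 0 a)) = (1 + η ^ 2) * (a : ℝ) := by
  have hodd : ∫ x, x * |x| ∂gaussianReal 0 a = 0 :=
    integral_eq_zero_of_odd _ fun x => by rw [abs_neg, neg_mul]
  have hI : ∫ x, max (η * x) x ^ 2 ∂gaussianReal 0 a = (1 + η ^ 2) * (a : ℝ) / 2 := by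
    simp_rw [sq_max_mul_self_eq hη1]
    rw [integral_add ((integrable_sq_gaussianReal 0 a).const_mul _)
        ((integrable_mul_abs_gaussianReal 0 a).const_mul _),
      integral_const_mul, integral_const_mul, integral_sq_gaussianReal_zero, hodd]
    ring
  exact ⟨hI, by rw [hI]; ring⟩

/-- For every variance `a ≥ 0` and slope `0 ≤ η ≤ 1`, the second moment of the
LeakyReLU `x ↦ max(η·x, x)` of a centered Gaussian satisfies
`∫ max(ηx, x)² dN(0,a)(x) = (1 + η²)·a/2`; equivalently,
`2·∫ max(ηx, x)² dN(0,a)(x) = (1 + η²)·a`. -/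
theorem gaussian_leakyrelu_sq_moment (a : ℝ≥0) (η : ℝ) (hη0 : 0 ≤ η) (hη1 : η ≤ 1) :
    (∫ x, max (η * x) x ^ 2 ∂(gaussianReal 0 a)) = (1 + η ^ 2) * (a : ℝ) / 2 ∧
      2 * (∫ x, max (η * x) x ^ 2 ∂(gaussianReal 0 a)) = (1 + η ^ 2) * (a : ℝ) :=
  gaussian_leakyrelu_sq_moment_general a η hη1
end

section
/- For every variance a ≥ 0, ∫ tanh(x)² d(gaussianReal 0 a)(x) ≤ 1 - (1 + 2a)^{-1/2}, and moreover 1 - (1 + 2a)^{-1/2} ≤ a; hence the Gaussian second moment of tanh satisfies ∫ tanh(x)² d(gaussianReal 0 a)(x) ≤ a. -/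
open MeasureTheory ProbabilityTheory Real
open scoped NNReal ENNReal

lemma tanh_sq_le (x : ℝ) : Real.tanh x ^ 2 ≤ 1 - Real.exp (-x ^ 2) := by
  have hc : Real.cosh x ≤ Real.exp (x ^ 2 / 2) := Real.cosh_le_exp_half_sq x
  have hc1 : (1 : ℝ) ≤ Real.cosh x := Real.one_le_cosh x
  have hcpos : 0 < Real.cosh x := lt_of_lt_of_le one_pos hc1
  have hsq : Real.cosh x ^ 2 = Real.sinh x ^ 2 + 1 := Real.cosh_sq x
  have htanh : Real.tanh x = Real.sinh x / Real.cosh x := Real.tanh_eq_sinh_div_cosh x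
  have hexp : Real.exp (-x ^ 2) * Real.exp (x ^ 2 / 2) ^ 2 = 1 := by
    rw [← Real.exp_nat_mul, ← Real.exp_add]
    norm_num
    ring
  have hkey : Real.exp (-x ^ 2) * Real.cosh x ^ 2 ≤ 1 := by
    calc Real.exp (-x ^ 2) * Real.cosh x ^ 2
        ≤ Real.exp (-x ^ 2) * Real.exp (x ^ 2 / 2) ^ 2 := by
          apply mul_le_mul_of_nonneg_left _ (Real.exp_nonneg _)
          exact pow_le_pow_left₀ hcpos.le hc 2
      _ = 1 := hexp
  rw [htanh, div_pow, div_le_iff₀ (by positivity)]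
  nlinarith [hkey, hsq]

lemma one_sub_rpow_le (a : ℝ) (ha : 0 ≤ a) :
    1 - (1 + 2 * a) ^ (-(1 : ℝ) / 2) ≤ a := by
  have hpos : (0 : ℝ) < 1 + 2 * a := by linarith
  have hr : (1 + 2 * a) ^ (-(1 : ℝ) / 2) = (Real.sqrt (1 + 2 * a))⁻¹ := by
    rw [show (-(1 : ℝ) / 2) = -(1 / 2) by ring, Real.rpow_neg hpos.le,
      Real.sqrt_eq_rpow]
  rw [hr]
  set s := Real.sqrt (1 + 2 * a) with hs
  have hs1 : 1 ≤ s := by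
    nlinarith [Real.sqrt_nonneg (1 + 2 * a), Real.sq_sqrt hpos.le]
  have hspos : 0 < s := lt_of_lt_of_le one_pos hs1
  have hssq : s ^ 2 = 1 + 2 * a := Real.sq_sqrt hpos.le
  rw [sub_le_iff_le_add, ← sub_le_iff_le_add', inv_eq_one_div, le_div_iff₀ hspos]
  nlinarith [mul_nonneg (sq_nonneg (s - 1)) (by linarith : (0:ℝ) ≤ s + 2)]

lemma gaussian_exp_neg_sq (a : ℝ≥0) (ha : a ≠ 0) :
    ∫ x, Real.exp (-x ^ 2) ∂(gaussianReal 0 a) = (1 + 2 * (a : ℝ)) ^ (-(1 : ℝ) / 2) := by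
  have hapos : (0 : ℝ) < a := by positivity
  rw [gaussianReal_of_var_ne_zero 0 ha]
  have hpdf : gaussianPDF 0 a = fun x => ((Real.toNNReal (gaussianPDFReal 0 a x) : ℝ≥0) : ℝ≥0∞) :=
    rfl
  rw [hpdf, integral_withDensity_eq_integral_smul
    ((measurable_gaussianPDFReal 0 a).real_toNNReal) _]
  have h1 : ∀ x : ℝ, (Real.toNNReal (gaussianPDFReal 0 a x) : ℝ≥0) • Real.exp (-x ^ 2)
      = (Real.sqrt (2 * π * a))⁻¹ * Real.exp (-(1 + (2 * (a:ℝ))⁻¹) * x ^ 2) := by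
    intro x
    rw [NNReal.smul_def, smul_eq_mul, Real.coe_toNNReal _ (gaussianPDFReal_nonneg 0 a x),
      gaussianPDFReal]
    rw [mul_assoc, ← Real.exp_add]
    congr 2
    field_simp
    ring
  simp_rw [h1]
  rw [integral_const_mul, integral_gaussian]
  have hb : (0 : ℝ) < 1 + (2 * (a:ℝ))⁻¹ := by positivity
  have hpi := Real.pi_pos
  rw [show (1 + 2 * (a : ℝ)) ^ (-(1 : ℝ) / 2) = Real.sqrt ((1 + 2 * (a:ℝ))⁻¹) by
    rw [show (-(1 : ℝ) / 2) = -(1 / 2) by ring, Real.rpow_neg (by positivity),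
      ← Real.sqrt_eq_rpow, Real.sqrt_inv]]
  rw [← Real.sqrt_inv, ← Real.sqrt_mul (by positivity)]
  congr 1
  field_simp
  ring

/-- For every variance `a ≥ 0`, `∫ tanh(x)² dN(0,a)(x) ≤ 1 - (1 + 2a)^(-1/2)`, and
moreover `1 - (1 + 2a)^(-1/2) ≤ a`; hence `∫ tanh(x)² dN(0,a)(x) ≤ a`. -/
theorem gaussian_tanh_sq_moment_le (a : ℝ≥0) :
    (∫ x, Real.tanh x ^ 2 ∂(gaussianReal 0 a)) ≤
        1 - (1 + 2 * (a : ℝ)) ^ (-(1 : ℝ) / 2) ∧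
      1 - (1 + 2 * (a : ℝ)) ^ (-(1 : ℝ) / 2) ≤ (a : ℝ) ∧
      (∫ x, Real.tanh x ^ 2 ∂(gaussianReal 0 a)) ≤ (a : ℝ) := by
  have h2 : 1 - (1 + 2 * (a : ℝ)) ^ (-(1 : ℝ) / 2) ≤ (a : ℝ) :=
    one_sub_rpow_le a a.coe_nonneg
  by_cases ha : a = 0
  · subst ha
    simp only [NNReal.coe_zero, mul_zero, add_zero, Real.one_rpow, sub_self]
    rw [gaussianReal_zero_var, integral_dirac]
    simp
  · have h1 : (∫ x, Real.tanh x ^ 2 ∂(gaussianReal 0 a)) ≤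
        1 - (1 + 2 * (a : ℝ)) ^ (-(1 : ℝ) / 2) := by
      have hct : Continuous fun x : ℝ => Real.tanh x ^ 2 := by
        have h : (fun x : ℝ => Real.tanh x ^ 2)
            = fun x : ℝ => (Real.sinh x / Real.cosh x) ^ 2 := by
          funext x; rw [Real.tanh_eq_sinh_div_cosh]
        rw [h]
        exact (Real.continuous_sinh.div Real.continuous_cosh
          fun x => (Real.cosh_pos x).ne').pow 2
      have hint1 : Integrable (fun x => Real.tanh x ^ 2) (gaussianReal 0 a) := by
        apply Integrable.mono' (integrable_const 1) hct.aestronglyMeasurable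
        filter_upwards with x
        rw [Real.norm_eq_abs, abs_of_nonneg (sq_nonneg _)]
        nlinarith [tanh_sq_le x, Real.exp_nonneg (-x ^ 2)]
      have hint2 : Integrable (fun x => Real.exp (-x ^ 2)) (gaussianReal 0 a) := by
        apply Integrable.mono' (integrable_const 1)
          ((Continuous.aestronglyMeasurable (by continuity :
            Continuous fun x : ℝ => Real.exp (-x ^ 2))))
        filter_upwards with x
        rw [Real.norm_eq_abs, abs_of_nonneg (Real.exp_nonneg _)]
        exact Real.exp_le_one_iff.2 (neg_nonpos.mpr (sq_nonneg x))
      calc (∫ x, Real.tanh x ^ 2 ∂(gaussianReal 0 a))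
          ≤ ∫ x, (1 - Real.exp (-x ^ 2)) ∂(gaussianReal 0 a) :=
            integral_mono hint1 ((integrable_const 1).sub hint2) tanh_sq_le
        _ = 1 - (1 + 2 * (a : ℝ)) ^ (-(1 : ℝ) / 2) := by
            rw [integral_sub (integrable_const 1) hint2, integral_const,
              gaussian_exp_neg_sq a ha]
            simp
    exact ⟨h1, h2, h1.trans h2⟩
end
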